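/- arXiv:2201.09423 — 5 statements merged into one kernel-verified Lean document; each statement's English description precedes it below -/
import Mathlib

section
/- In the abstract relative-energy setting with the distance-weighted length constraint on ξ, one has ∫_Ω ‖n − ξ‖² · √(2w)‖a‖ dμ + ∫_Ω min{δ², 1} · √(2w)‖a‖ dμ ≤ (2 + 1/c)·E. -/
/-!
With `F := √(2w)·(‖a‖ − ⟨ξ, a⟩)`, both integrands on the left are bounded pointwise by multiples
of `F`: expanding `‖n − ξ‖²` with `‖n‖ = 1` and `‖ξ‖ ≤ 1` gives `‖n − ξ‖²‖a‖ ≤ 2(‖a‖ − ⟨ξ, a⟩)`,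
while `‖ξ‖ ≤ 1 − c·min{δ², 1}` gives `c·min{δ², 1}‖a‖ ≤ ‖a‖ − ⟨ξ, a⟩`. Finally `∫ F ≤ E`, since
the integrand of `E` exceeds `F` by `½‖u‖² + (ε/2)‖a‖² + w/ε − √(2w)‖a‖ ≥ 0` (AM-GM).
-/

open MeasureTheory
open scoped InnerProductSpace

theorem Real.sqrt_two_mul_mul_le {w ε : ℝ} (hw : 0 ≤ w) (hε : 0 < ε) (t : ℝ) :
    √(2 * w) * t ≤ ε / 2 * t ^ 2 + w / ε := by
  have hsq : √(2 * w) ^ 2 = 2 * w := Real.sq_sqrt (by linarith)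
  rw [div_mul_eq_mul_div, div_add_div _ _ two_ne_zero hε.ne', le_div_iff₀ (by positivity)]
  nlinarith [sq_nonneg (ε * t - √(2 * w))]

section InnerProductSpace

variable {V : Type*} [NormedAddCommGroup V] [InnerProductSpace ℝ V]

theorem mul_norm_le_norm_sub_inner {ξ : V} {η : ℝ} (hξ : ‖ξ‖ ≤ 1 - η) (a : V) :
    η * ‖a‖ ≤ ‖a‖ - ⟪ξ, a⟫_ℝ := by
  nlinarith [real_inner_le_norm ξ a, mul_le_mul_of_nonneg_right hξ (norm_nonneg a)]

theorem abs_real_inner_le_norm_of_norm_le_one {ξ : V} (hξ : ‖ξ‖ ≤ 1) (a : V) :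
    |⟪ξ, a⟫_ℝ| ≤ ‖a‖ :=
  (abs_real_inner_le_norm ξ a).trans (mul_le_of_le_one_left (norm_nonneg a) hξ)

theorem norm_sub_sq_mul_norm_le {n ξ a : V} (hn : a ≠ 0 → n = ‖a‖⁻¹ • a) (hξ : ‖ξ‖ ≤ 1) :
    ‖n - ξ‖ ^ 2 * ‖a‖ ≤ 2 * (‖a‖ - ⟪ξ, a⟫_ℝ) := by
  rcases eq_or_ne a 0 with rfl | ha
  · simp
  have hna : ‖a‖ ≠ 0 := norm_ne_zero_iff.mpr ha
  have hn1 : ‖n‖ = 1 := by rw [hn ha, norm_smul, norm_inv, norm_norm, inv_mul_cancel₀ hna]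
  have hnξ : ⟪n, ξ⟫_ℝ * ‖a‖ = ⟪ξ, a⟫_ℝ := by
    rw [hn ha, real_inner_smul_left, real_inner_comm]
    field_simp
  have hξ2 : ‖ξ‖ ^ 2 * ‖a‖ ≤ ‖a‖ := by
    nlinarith [norm_nonneg ξ, norm_nonneg a, mul_le_mul_of_nonneg_right hξ (norm_nonneg a)]
  rw [norm_sub_sq_real, hn1]
  linarith

end InnerProductSpace

theorem integrable_sqrt_two_mul_mul_norm {Ω V : Type*} [MeasurableSpace Ω] {μ : Measure Ω}
    [NormedAddCommGroup V] {w : Ω → ℝ} {a : Ω → V}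
    (hw0 : ∀ᵐ x ∂μ, 0 ≤ w x) (hwi : Integrable w μ) (ha : AEStronglyMeasurable a μ)
    (ha2 : Integrable (fun x => ‖a x‖ ^ 2) μ) :
    Integrable (fun x => √(2 * w x) * ‖a x‖) μ := by
  refine ((ha2.const_mul (1 / 2)).add (hwi.div_const 1)).mono'
    ((Real.continuous_sqrt.comp_aestronglyMeasurable (hwi.1.const_mul 2)).mul ha.norm) ?_
  filter_upwards [hw0] with x hwx
  rw [Real.norm_of_nonneg (by positivity)]
  exact Real.sqrt_two_mul_mul_le hwx one_pos _

theorem integrable_sqrt_two_mul_mul_inner {Ω V : Type*} [MeasurableSpace Ω] {μ : Measure Ω}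
    [NormedAddCommGroup V] [InnerProductSpace ℝ V] {w : Ω → ℝ} {ξ a : Ω → V}
    (hw0 : ∀ᵐ x ∂μ, 0 ≤ w x) (hwi : Integrable w μ) (hξ : AEStronglyMeasurable ξ μ)
    (hξ1 : ∀ᵐ x ∂μ, ‖ξ x‖ ≤ 1) (ha : AEStronglyMeasurable a μ)
    (ha2 : Integrable (fun x => ‖a x‖ ^ 2) μ) :
    Integrable (fun x => √(2 * w x) * ⟪ξ x, a x⟫_ℝ) μ := by
  refine (integrable_sqrt_two_mul_mul_norm hw0 hwi ha ha2).mono'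
    ((Real.continuous_sqrt.comp_aestronglyMeasurable (hwi.1.const_mul 2)).mul
      (hξ.inner ha)) ?_
  filter_upwards [hξ1] with x hx
  rw [norm_mul, Real.norm_of_nonneg (Real.sqrt_nonneg _), Real.norm_eq_abs]
  exact mul_le_mul_of_nonneg_left (abs_real_inner_le_norm_of_norm_le_one hx _)
    (Real.sqrt_nonneg _)

theorem integral_le_mul_integral_of_nonneg_of_ae_le {Ω : Type*} [MeasurableSpace Ω]
    {μ : Measure Ω} {f g : Ω → ℝ} {k : ℝ} (hf : 0 ≤ f) (hg : Integrable g μ)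
    (hfg : ∀ᵐ x ∂μ, f x ≤ k * g x) :
    ∫ x, f x ∂μ ≤ k * ∫ x, g x ∂μ := by
  rw [← integral_const_mul]
  exact integral_mono_of_nonneg (.of_forall hf) (hg.const_mul k) hfg

theorem stmt4_general {Ω : Type*} [MeasurableSpace Ω] (μ : Measure Ω)
    (d : ℕ) (ε : ℝ) (hε : 0 < ε)
    (u a ξ : Ω → EuclideanSpace ℝ (Fin d)) (w : Ω → ℝ)
    (ha : AEStronglyMeasurable a μ)
    (hξ : AEStronglyMeasurable ξ μ)
    (hw0 : ∀ᵐ x ∂μ, 0 ≤ w x) (hξ1 : ∀ᵐ x ∂μ, ‖ξ x‖ ≤ 1)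
    (hu2 : Integrable (fun x => ‖u x‖ ^ 2) μ)
    (ha2 : Integrable (fun x => ‖a x‖ ^ 2) μ)
    (hwi : Integrable w μ)
    (s : EuclideanSpace ℝ (Fin d))
    (n : Ω → EuclideanSpace ℝ (Fin d))
    (hn : ∀ x, (a x ≠ 0 → n x = ‖a x‖⁻¹ • a x) ∧ (a x = 0 → n x = s))
    (E : ℝ)
    (hE : E = ∫ x, (1 / 2 * ‖u x‖ ^ 2 + ε / 2 * ‖a x‖ ^ 2 + w x / ε
        - Real.sqrt (2 * w x) * (inner ℝ (ξ x) (a x) : ℝ)) ∂μ)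
    (δ : Ω → ℝ)
    (c : ℝ) (hc : c ∈ Set.Ioo (0 : ℝ) 1)
    (hξc : ∀ᵐ x ∂μ, ‖ξ x‖ ≤ 1 - c * min (δ x ^ 2) 1) :
    ∫ x, ‖n x - ξ x‖ ^ 2 * (Real.sqrt (2 * w x) * ‖a x‖) ∂μ
      + ∫ x, min (δ x ^ 2) 1 * (Real.sqrt (2 * w x) * ‖a x‖) ∂μ
    ≤ (2 + 1 / c) * E := by
  obtain ⟨hc0, -⟩ := hc
  set F := fun x => √(2 * w x) * (‖a x‖ - ⟪ξ x, a x⟫_ℝ)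
  have hg := integrable_sqrt_two_mul_mul_norm hw0 hwi ha ha2
  have hI := integrable_sqrt_two_mul_mul_inner hw0 hwi hξ hξ1 ha ha2
  have hF : Integrable F μ := by
    simp only [F, mul_sub]
    exact hg.sub hI
  have hFE : ∫ x, F x ∂μ ≤ E := by
    rw [hE]
    refine integral_mono_ae hF ((((hu2.const_mul _).add (ha2.const_mul _)).add
      (hwi.div_const ε)).sub hI) ?_
    filter_upwards [hw0] with x hwx
    linarith [Real.sqrt_two_mul_mul_le hwx hε ‖a x‖, sq_nonneg ‖u x‖,
      mul_sub (√(2 * w x)) ‖a x‖ ⟪ξ x, a x⟫_ℝ]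
  have hn_le : ∫ x, ‖n x - ξ x‖ ^ 2 * (√(2 * w x) * ‖a x‖) ∂μ ≤ 2 * ∫ x, F x ∂μ := by
    refine integral_le_mul_integral_of_nonneg_of_ae_le (fun x => by positivity) hF ?_
    filter_upwards [hξ1] with x hx
    have hpt := mul_le_mul_of_nonneg_left (norm_sub_sq_mul_norm_le (hn x).1 hx)
      (Real.sqrt_nonneg (2 * w x))
    simp only [F]
    linarith
  have hδ_le : ∫ x, min (δ x ^ 2) 1 * (√(2 * w x) * ‖a x‖) ∂μ ≤ 1 / c * ∫ x, F x ∂μ := by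
    refine integral_le_mul_integral_of_nonneg_of_ae_le (fun x => by positivity) hF ?_
    filter_upwards [hξc] with x hx
    have hpt := mul_le_mul_of_nonneg_left (mul_norm_le_norm_sub_inner hx (a x))
      (Real.sqrt_nonneg (2 * w x))
    simp only [F]
    rw [one_div_mul_eq_div, le_div_iff₀ hc0]
    linarith
  calc _ ≤ (2 + 1 / c) * ∫ x, F x ∂μ := by linarith
    _ ≤ (2 + 1 / c) * E := by gcongr

/-- In the abstract relative-energy setting with the
distance-weighted length constraint `‖ξ‖ ≤ 1 − c·min{δ², 1}` on `ξ`, one has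
`∫ ‖n − ξ‖²·√(2w)‖a‖ dμ + ∫ min{δ², 1}·√(2w)‖a‖ dμ ≤ (2 + 1/c)·E`. -/
theorem stmt4 {Ω : Type*} [MeasurableSpace Ω] (μ : Measure Ω)
    (d : ℕ) (hd : 1 ≤ d) (ε : ℝ) (hε : 0 < ε)
    (u a ξ : Ω → EuclideanSpace ℝ (Fin d)) (w : Ω → ℝ)
    (hu : AEStronglyMeasurable u μ) (ha : AEStronglyMeasurable a μ)
    (hξ : AEStronglyMeasurable ξ μ) (hw : AEStronglyMeasurable w μ)
    (hw0 : ∀ᵐ x ∂μ, 0 ≤ w x) (hξ1 : ∀ᵐ x ∂μ, ‖ξ x‖ ≤ 1)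
    (hu2 : Integrable (fun x => ‖u x‖ ^ 2) μ)
    (ha2 : Integrable (fun x => ‖a x‖ ^ 2) μ)
    (hwi : Integrable w μ)
    (s : EuclideanSpace ℝ (Fin d)) (hs : ‖s‖ = 1)
    (n : Ω → EuclideanSpace ℝ (Fin d))
    (hn : ∀ x, (a x ≠ 0 → n x = ‖a x‖⁻¹ • a x) ∧ (a x = 0 → n x = s))
    (E : ℝ)
    (hE : E = ∫ x, (1 / 2 * ‖u x‖ ^ 2 + ε / 2 * ‖a x‖ ^ 2 + w x / ε
        - Real.sqrt (2 * w x) * (inner ℝ (ξ x) (a x) : ℝ)) ∂μ)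
    (δ : Ω → ℝ) (hδm : Measurable δ) (hδ0 : ∀ x, 0 ≤ δ x)
    (c : ℝ) (hc : c ∈ Set.Ioo (0 : ℝ) 1)
    (hξc : ∀ᵐ x ∂μ, ‖ξ x‖ ≤ 1 - c * min (δ x ^ 2) 1) :
    ∫ x, ‖n x - ξ x‖ ^ 2 * (Real.sqrt (2 * w x) * ‖a x‖) ∂μ
      + ∫ x, min (δ x ^ 2) 1 * (Real.sqrt (2 * w x) * ‖a x‖) ∂μ
    ≤ (2 + 1 / c) * E :=
  stmt4_general μ d ε hε u a ξ w ha hξ hw0 hξ1 hu2 ha2 hwi s n hn E hE δ c hc hξc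
end

section
/- In the abstract relative-energy setting with the distance-weighted length constraint on ξ, there exists a constant C ∈ (0, ∞) depending only on c such that ∫_Ω ‖n − ξ‖² · ε‖a‖² dμ + ∫_Ω min{δ², 1} · ε‖a‖² dμ ≤ C·E (for instance C = 12 + 6/c works). -/
/-!
Write `x = ε‖a‖`, `y = √(2w)` and `t = ⟨n, ξ⟩`. Since `a = ‖a‖ n`, twice `ε` times the energy
density is `ε‖u‖² + (x - y)² + 2xy(1 - t)`, a sum of nonnegative terms. Both weights on the left
are controlled by `1 - t`: `‖n - ξ‖² ≤ 2(1 - t)` because `‖n‖ = 1 ≥ ‖ξ‖`, and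
`c·min{δ², 1} ≤ 1 - ‖ξ‖ ≤ 1 - t` by the length constraint. Together with `x² ≤ (x - y)² + 2xy`
this bounds the integrand on the left by `(8 + 2/c)` times the energy density pointwise.
-/

open MeasureTheory

section Normalize

variable {F : Type*} [NormedAddCommGroup F] [NormedSpace ℝ F]
  {Ω : Type*} [MeasurableSpace Ω] {μ : Measure Ω}

open Classical in
noncomputable def normalizeOr (s v : F) : F := if v = 0 then s else ‖v‖⁻¹ • v

lemma eq_normalizeOr {s v n : F} (hv : v ≠ 0 → n = ‖v‖⁻¹ • v) (h0 : v = 0 → n = s) :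
    n = normalizeOr s v := by
  by_cases h : v = 0 <;> simp [normalizeOr, h, hv, h0]

lemma norm_normalizeOr {s : F} (hs : ‖s‖ = 1) (v : F) : ‖normalizeOr s v‖ = 1 := by
  by_cases hv : v = 0
  · simp [normalizeOr, hv, hs]
  · simp [normalizeOr, hv, norm_smul]

lemma norm_smul_normalizeOr (s v : F) : ‖v‖ • normalizeOr s v = v := by
  by_cases hv : v = 0
  · simp [hv]
  · simp [normalizeOr, hv, smul_smul]

lemma measurable_normalizeOr [MeasurableSpace F] [BorelSpace F] [SecondCountableTopology F]
    (s : F) : Measurable (normalizeOr s) :=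
  Measurable.ite (measurableSet_singleton 0) measurable_const
    (measurable_norm.inv.smul measurable_id)

lemma MeasureTheory.AEStronglyMeasurable.normalizeOr [MeasurableSpace F] [BorelSpace F]
    [SecondCountableTopology F] (s : F) {a : Ω → F} (ha : AEStronglyMeasurable a μ) :
    AEStronglyMeasurable (fun x => normalizeOr s (a x)) μ :=
  ((measurable_normalizeOr s).comp_aemeasurable ha.aemeasurable).aestronglyMeasurable

end Normalize

section Weights

variable {F : Type*} [NormedAddCommGroup F] {Ω : Type*} [MeasurableSpace Ω] {μ : Measure Ω}

lemma MeasureTheory.Integrable.norm_sub_sq_mul {n ξ : Ω → F} {g : Ω → ℝ} (hg : Integrable g μ)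
    (hn : AEStronglyMeasurable n μ) (hξ : AEStronglyMeasurable ξ μ)
    (hn1 : ∀ᵐ x ∂μ, ‖n x‖ ≤ 1) (hξ1 : ∀ᵐ x ∂μ, ‖ξ x‖ ≤ 1) :
    Integrable (fun x => ‖n x - ξ x‖ ^ 2 * g x) μ := by
  refine hg.bdd_mul (c := 4) ((hn.sub hξ).norm.pow 2) ?_
  filter_upwards [hn1, hξ1] with x hnx hξx
  have : ‖n x - ξ x‖ ≤ 2 := by linarith [norm_sub_le (n x) (ξ x)]
  rw [norm_pow, norm_norm]
  nlinarith [norm_nonneg (n x - ξ x)]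

lemma MeasureTheory.Integrable.min_sq_one_mul {δ g : Ω → ℝ} (hg : Integrable g μ)
    (hδ : AEStronglyMeasurable δ μ) : Integrable (fun x => min (δ x ^ 2) 1 * g x) μ := by
  refine hg.bdd_mul (c := 1) ((hδ.pow 2).inf aestronglyMeasurable_const) ?_
  refine Filter.Eventually.of_forall fun x => ?_
  rw [Real.norm_of_nonneg (by positivity)]
  exact min_le_right _ _

end Weights

section Energy

variable {F : Type*} [NormedAddCommGroup F] [InnerProductSpace ℝ F]
  {Ω : Type*} [MeasurableSpace Ω] {μ : Measure Ω}

noncomputable def relEnergyDensity (ε : ℝ) (u a ξ : F) (w : ℝ) : ℝ :=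
  1 / 2 * ‖u‖ ^ 2 + ε / 2 * ‖a‖ ^ 2 + w / ε - Real.sqrt (2 * w) * inner ℝ ξ a

lemma two_mul_mul_relEnergyDensity {ε w : ℝ} (hε : ε ≠ 0) (hw : 0 ≤ w) {u a ξ n : F}
    (ha : ‖a‖ • n = a) :
    2 * ε * relEnergyDensity ε u a ξ w = ε * ‖u‖ ^ 2 + (ε * ‖a‖ - Real.sqrt (2 * w)) ^ 2
      + 2 * (ε * ‖a‖) * Real.sqrt (2 * w) * (1 - inner ℝ n ξ) := by
  have hinner : inner ℝ ξ a = ‖a‖ * inner ℝ n ξ := by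
    conv_lhs => rw [← ha]
    rw [inner_smul_right, real_inner_comm]
  have hsq : Real.sqrt (2 * w) ^ 2 = 2 * w := Real.sq_sqrt (by positivity)
  rw [relEnergyDensity, hinner]
  field_simp
  linear_combination -hsq

lemma two_mul_one_sub_add_mul_sq_le {x y t m c : ℝ} (hx : 0 ≤ x) (hy : 0 ≤ y) (ht : -1 ≤ t)
    (htm : t ≤ 1 - c * m) (hm0 : 0 ≤ m) (hm1 : m ≤ 1) (hc0 : 0 < c) (hc1 : c ≤ 1) :
    (2 * (1 - t) + m) * x ^ 2 ≤ (4 + 1 / c) * ((x - y) ^ 2 + 2 * x * y * (1 - t)) := by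
  have hxy : 0 ≤ x * y := mul_nonneg hx hy
  have ht1 : t ≤ 1 := by nlinarith [mul_nonneg hc0.le hm0]
  have hmc : m ≤ 1 / c * (1 - t) := by rw [div_mul_eq_mul_div, le_div_iff₀ hc0]; linarith
  have hc : 1 ≤ 1 / c := by rw [le_div_iff₀ hc0]; linarith
  nlinarith [sq_nonneg (x - y), sq_nonneg y, mul_nonneg hxy (by linarith : (0:ℝ) ≤ 1 - t),
    mul_le_mul_of_nonneg_left hmc (by positivity : 0 ≤ 2 * x * y),
    mul_le_mul_of_nonneg_left hm1 (sq_nonneg (x - y)),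
    mul_le_mul_of_nonneg_right hc (sq_nonneg (x - y))]

lemma norm_sub_sq_mul_add_mul_le_relEnergyDensity {ε w m c : ℝ} {u a ξ n : F} (hε : 0 < ε)
    (hw : 0 ≤ w) (hn : ‖n‖ = 1) (ha : ‖a‖ • n = a) (hm0 : 0 ≤ m) (hm1 : m ≤ 1) (hc0 : 0 < c)
    (hc1 : c ≤ 1) (hξ : ‖ξ‖ ≤ 1 - c * m) :
    ‖n - ξ‖ ^ 2 * (ε * ‖a‖ ^ 2) + m * (ε * ‖a‖ ^ 2)
      ≤ (8 + 2 / c) * relEnergyDensity ε u a ξ w := by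
  have hξ1 : ‖ξ‖ ≤ 1 := hξ.trans (by nlinarith [mul_nonneg hc0.le hm0])
  have ht_le : inner ℝ n ξ ≤ ‖ξ‖ := by simpa [hn] using real_inner_le_norm n ξ
  have ht_ge : -1 ≤ inner ℝ n ξ :=
    neg_le_of_abs_le ((abs_real_inner_le_norm n ξ).trans (by rw [hn, one_mul]; exact hξ1))
  have hnξ : ‖n - ξ‖ ^ 2 ≤ 2 * (1 - inner ℝ n ξ) := by
    rw [norm_sub_sq_real, hn]
    nlinarith [norm_nonneg ξ]
  have hdensity := two_mul_mul_relEnergyDensity (u := u) (ξ := ξ) hε.ne' hw ha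
  refine le_of_mul_le_mul_left ?_ hε
  calc ε * (‖n - ξ‖ ^ 2 * (ε * ‖a‖ ^ 2) + m * (ε * ‖a‖ ^ 2))
      = (‖n - ξ‖ ^ 2 + m) * (ε * ‖a‖) ^ 2 := by ring
    _ ≤ (2 * (1 - inner ℝ n ξ) + m) * (ε * ‖a‖) ^ 2 := by gcongr
    _ ≤ (4 + 1 / c) * ((ε * ‖a‖ - Real.sqrt (2 * w)) ^ 2
          + 2 * (ε * ‖a‖) * Real.sqrt (2 * w) * (1 - inner ℝ n ξ)) :=
        two_mul_one_sub_add_mul_sq_le (by positivity) (Real.sqrt_nonneg _) ht_ge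
          (ht_le.trans hξ) hm0 hm1 hc0 hc1
    _ ≤ (4 + 1 / c) * (2 * ε * relEnergyDensity ε u a ξ w) := by
        rw [hdensity]
        gcongr
        linarith [mul_nonneg hε.le (sq_nonneg ‖u‖)]
    _ = ε * ((8 + 2 / c) * relEnergyDensity ε u a ξ w) := by ring

lemma integrable_relEnergyDensity {ε : ℝ} {u a ξ : Ω → F} {w : Ω → ℝ}
    (ha : AEStronglyMeasurable a μ) (hξ : AEStronglyMeasurable ξ μ) (hw0 : ∀ᵐ x ∂μ, 0 ≤ w x)
    (hξ1 : ∀ᵐ x ∂μ, ‖ξ x‖ ≤ 1) (hu2 : Integrable (fun x => ‖u x‖ ^ 2) μ)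
    (ha2 : Integrable (fun x => ‖a x‖ ^ 2) μ) (hw : Integrable w μ) :
    Integrable (fun x => relEnergyDensity ε (u x) (a x) (ξ x) (w x)) μ := by
  have hcross : Integrable (fun x => Real.sqrt (2 * w x) * inner ℝ (ξ x) (a x)) μ := by
    refine (hw.add (ha2.div_const 2)).mono'
      ((Real.continuous_sqrt.comp_aestronglyMeasurable (hw.1.const_mul 2)).mul (hξ.inner ha)) ?_
    filter_upwards [hw0, hξ1] with x hwx hξx
    have hinner : |inner ℝ (ξ x) (a x)| ≤ ‖a x‖ :=
      (abs_real_inner_le_norm _ _).trans (mul_le_of_le_one_left (norm_nonneg _) hξx)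
    have hsq : Real.sqrt (2 * w x) ^ 2 = 2 * w x := Real.sq_sqrt (by positivity)
    rw [Real.norm_eq_abs, abs_mul, abs_of_nonneg (Real.sqrt_nonneg _), Pi.add_apply]
    nlinarith [sq_nonneg (Real.sqrt (2 * w x) - ‖a x‖), Real.sqrt_nonneg (2 * w x),
      mul_le_mul_of_nonneg_left hinner (Real.sqrt_nonneg (2 * w x))]
  exact (((hu2.const_mul _).add (ha2.const_mul _)).add (hw.div_const ε)).sub hcross

end Energy

theorem stmt5_general {Ω : Type*} [MeasurableSpace Ω] (μ : Measure Ω)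
    (d : ℕ) (ε : ℝ) (hε : 0 < ε)
    (u a ξ : Ω → EuclideanSpace ℝ (Fin d)) (w : Ω → ℝ)
    (ha : AEStronglyMeasurable a μ)
    (hξ : AEStronglyMeasurable ξ μ)
    (hw0 : ∀ᵐ x ∂μ, 0 ≤ w x) (hξ1 : ∀ᵐ x ∂μ, ‖ξ x‖ ≤ 1)
    (hu2 : Integrable (fun x => ‖u x‖ ^ 2) μ)
    (ha2 : Integrable (fun x => ‖a x‖ ^ 2) μ)
    (hwi : Integrable w μ)
    (s : EuclideanSpace ℝ (Fin d)) (hs : ‖s‖ = 1)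
    (n : Ω → EuclideanSpace ℝ (Fin d))
    (hn : ∀ x, (a x ≠ 0 → n x = ‖a x‖⁻¹ • a x) ∧ (a x = 0 → n x = s))
    (E : ℝ)
    (hE : E = ∫ x, (1 / 2 * ‖u x‖ ^ 2 + ε / 2 * ‖a x‖ ^ 2 + w x / ε
        - Real.sqrt (2 * w x) * (inner ℝ (ξ x) (a x) : ℝ)) ∂μ)
    (δ : Ω → ℝ) (hδm : Measurable δ)
    (c : ℝ) (hc : c ∈ Set.Ioo (0 : ℝ) 1)
    (hξc : ∀ᵐ x ∂μ, ‖ξ x‖ ≤ 1 - c * min (δ x ^ 2) 1) :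
    ∫ x, ‖n x - ξ x‖ ^ 2 * (ε * ‖a x‖ ^ 2) ∂μ
      + ∫ x, min (δ x ^ 2) 1 * (ε * ‖a x‖ ^ 2) ∂μ
    ≤ (12 + 6 / c) * E := by
  obtain ⟨hc0, hc1⟩ := hc
  replace hE : E = ∫ x, relEnergyDensity ε (u x) (a x) (ξ x) (w x) ∂μ := hE
  have hn_eq : n = fun x => normalizeOr s (a x) :=
    funext fun x => eq_normalizeOr (hn x).1 (hn x).2
  have hn1 (x : Ω) : ‖n x‖ = 1 := hn_eq ▸ norm_normalizeOr hs (a x)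
  have hεa : Integrable (fun x => ε * ‖a x‖ ^ 2) μ := ha2.const_mul ε
  have hdist := hεa.norm_sub_sq_mul (hn_eq ▸ ha.normalizeOr s) hξ
    (Filter.Eventually.of_forall fun x => (hn1 x).le) hξ1
  have hmin := hεa.min_sq_one_mul hδm.aestronglyMeasurable
  have hpoint : ∀ᵐ x ∂μ, ‖n x - ξ x‖ ^ 2 * (ε * ‖a x‖ ^ 2) + min (δ x ^ 2) 1 * (ε * ‖a x‖ ^ 2)
      ≤ (8 + 2 / c) * relEnergyDensity ε (u x) (a x) (ξ x) (w x) := by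
    filter_upwards [hw0, hξc] with x hwx hξx
    exact norm_sub_sq_mul_add_mul_le_relEnergyDensity hε hwx (hn1 x)
      (hn_eq ▸ norm_smul_normalizeOr s (a x)) (by positivity) (min_le_right _ _) hc0 hc1.le hξx
  have hbound := integral_mono_ae (hdist.add hmin)
    ((integrable_relEnergyDensity ha hξ hw0 hξ1 hu2 ha2 hwi).const_mul _) hpoint
  simp only [Pi.add_apply] at hbound
  rw [integral_add hdist hmin, integral_const_mul, ← hE] at hbound
  have hlhs : 0 ≤ ∫ x, ‖n x - ξ x‖ ^ 2 * (ε * ‖a x‖ ^ 2) ∂μ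
      + ∫ x, min (δ x ^ 2) 1 * (ε * ‖a x‖ ^ 2) ∂μ :=
    add_nonneg (integral_nonneg fun x => by positivity) (integral_nonneg fun x => by positivity)
  have hE0 : 0 ≤ E := nonneg_of_mul_nonneg_right (hlhs.trans hbound) (by positivity)
  refine hbound.trans (mul_le_mul_of_nonneg_right ?_ hE0)
  have : 2 / c ≤ 6 / c := by gcongr; norm_num
  linarith

/-- In the abstract relative-energy setting with the
distance-weighted length constraint `‖ξ‖ ≤ 1 − c·min{δ², 1}` on `ξ`, there is a
constant `C` depending only on `c` (namely `C = 12 + 6/c`) with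
`∫ ‖n − ξ‖²·ε‖a‖² dμ + ∫ min{δ², 1}·ε‖a‖² dμ ≤ C·E`. -/
theorem stmt5 {Ω : Type*} [MeasurableSpace Ω] (μ : Measure Ω)
    (d : ℕ) (hd : 1 ≤ d) (ε : ℝ) (hε : 0 < ε)
    (u a ξ : Ω → EuclideanSpace ℝ (Fin d)) (w : Ω → ℝ)
    (hu : AEStronglyMeasurable u μ) (ha : AEStronglyMeasurable a μ)
    (hξ : AEStronglyMeasurable ξ μ) (hw : AEStronglyMeasurable w μ)
    (hw0 : ∀ᵐ x ∂μ, 0 ≤ w x) (hξ1 : ∀ᵐ x ∂μ, ‖ξ x‖ ≤ 1)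
    (hu2 : Integrable (fun x => ‖u x‖ ^ 2) μ)
    (ha2 : Integrable (fun x => ‖a x‖ ^ 2) μ)
    (hwi : Integrable w μ)
    (s : EuclideanSpace ℝ (Fin d)) (hs : ‖s‖ = 1)
    (n : Ω → EuclideanSpace ℝ (Fin d))
    (hn : ∀ x, (a x ≠ 0 → n x = ‖a x‖⁻¹ • a x) ∧ (a x = 0 → n x = s))
    (E : ℝ)
    (hE : E = ∫ x, (1 / 2 * ‖u x‖ ^ 2 + ε / 2 * ‖a x‖ ^ 2 + w x / ε
        - Real.sqrt (2 * w x) * (inner ℝ (ξ x) (a x) : ℝ)) ∂μ)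
    (δ : Ω → ℝ) (hδm : Measurable δ) (hδ0 : ∀ x, 0 ≤ δ x)
    (c : ℝ) (hc : c ∈ Set.Ioo (0 : ℝ) 1)
    (hξc : ∀ᵐ x ∂μ, ‖ξ x‖ ≤ 1 - c * min (δ x ^ 2) 1) :
    ∫ x, ‖n x - ξ x‖ ^ 2 * (ε * ‖a x‖ ^ 2) ∂μ
      + ∫ x, min (δ x ^ 2) 1 * (ε * ‖a x‖ ^ 2) ∂μ
    ≤ (12 + 6 / c) * E :=
  stmt5_general μ d ε hε u a ξ w ha hξ hw0 hξ1 hu2 ha2 hwi s hs n hn E hE δ hδm c hc hξc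
end

section
/- Let τ ≥ 0 and let g : [0, τ] → [0, ∞) be Lebesgue measurable and integrable, and let M ≥ 0 satisfy g(r) ≤ M for almost every r ∈ [0, τ]. Then ( ∫₀^τ g(r) dr )² ≤ 2 M ∫₀^τ r·g(r) dr. -/
/-!
Writing `(∫ g)²` as the integral of `g(r) g(s)` over the square, the part above the diagonal
reflects onto the part below it, so `(∫ g)² ≤ 2 ∫ g(r) G(r) dr` with `G(r) = ∫₀^r g ≤ M r`.
-/

open MeasureTheory Set

section LowerTriangle

variable {α : Type*} [MeasurableSpace α] [TopologicalSpace α] [LinearOrder α]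

theorem integral_indicator_prod_le_eq_mul_setIntegral_Iic [ClosedIicTopology α]
    [OpensMeasurableSpace α] (μ : Measure α) (f : α → ℝ) (r : α) :
    ∫ s, {p : α × α | p.2 ≤ p.1}.indicator (fun p => f p.1 * f p.2) (r, s) ∂μ
      = f r * ∫ s in Iic r, f s ∂μ := by
  rw [← integral_const_mul, ← integral_indicator measurableSet_Iic]
  congr 1 with s

variable [OrderClosedTopology α] [SecondCountableTopology α] [OpensMeasurableSpace α]
  {μ : Measure α} [SFinite μ] {f : α → ℝ}

theorem integrable_mul_setIntegral_Iic (hf : Integrable f μ) :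
    Integrable (fun r => f r * ∫ s in Iic r, f s ∂μ) μ := by
  simpa only [integral_indicator_prod_le_eq_mul_setIntegral_Iic] using
    ((hf.mul_prod hf).indicator
      (measurableSet_le measurable_snd measurable_fst)).integral_prod_left

theorem sq_integral_le_two_mul_integral_mul_setIntegral_Iic (hf : Integrable f μ) :
    (∫ x, f x ∂μ) ^ 2 ≤ 2 * ∫ r, f r * ∫ s in Iic r, f s ∂μ ∂μ := by
  set T : Set (α × α) := {p | p.2 ≤ p.1}
  set F : α × α → ℝ := fun p => f p.1 * f p.2
  have hT : MeasurableSet T := measurableSet_le measurable_snd measurable_fst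
  have hF : Integrable F (μ.prod μ) := hf.mul_prod hf
  have hsq : (∫ x, f x ∂μ) ^ 2 = ∫ p, F p ∂μ.prod μ := by
    rw [sq, integral_prod_mul]
  have hlower : ∫ p in T, F p ∂μ.prod μ = ∫ r, f r * ∫ s in Iic r, f s ∂μ ∂μ := by
    rw [← integral_indicator hT, integral_prod _ (hF.indicator hT)]
    simp only [T, F, integral_indicator_prod_le_eq_mul_setIntegral_Iic]
  -- Reflect the strict upper triangle onto the lower one; on the diagonal `F` is a square.
  have hupper : ∫ p in Tᶜ, F p ∂μ.prod μ ≤ ∫ p in T, F p ∂μ.prod μ := by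
    rw [← integral_indicator hT.compl, ← integral_indicator hT, ← integral_prod_swap]
    refine integral_mono (hF.indicator hT.compl).swap (hF.indicator hT) fun p => ?_
    rcases lt_trichotomy p.2 p.1 with h | h | h
    · simp [T, F, indicator, h.le, h.not_ge, mul_comm]
    · simp [T, F, indicator, h, mul_self_nonneg]
    · simp [T, F, indicator, h.le, h.not_ge]
  rw [hsq, ← integral_add_compl hT hF]
  linarith

end LowerTriangle

section Interval

variable {τ M : ℝ} {g : ℝ → ℝ}

theorem setIntegral_Iic_le_mul_of_ae_le (hg : IntegrableOn g (Icc 0 τ))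
    (hgM : ∀ᵐ r ∂(volume.restrict (Icc (0 : ℝ) τ)), g r ≤ M) {r : ℝ} (hr : r ∈ Icc 0 τ) :
    ∫ s in Iic r, g s ∂(volume.restrict (Icc 0 τ)) ≤ M * r := by
  have hsub : Icc 0 r ⊆ Icc 0 τ := Icc_subset_Icc le_rfl hr.2
  have hIcc : Iic r ∩ Icc 0 τ = Icc 0 r := by
    ext s
    simp only [mem_inter_iff, mem_Iic, mem_Icc]
    grind
  rw [Measure.restrict_restrict measurableSet_Iic, hIcc]
  calc ∫ s in Icc 0 r, g s ≤ ∫ s in Icc 0 r, M :=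
        setIntegral_mono_ae_restrict (hg.mono_set hsub) (integrableOn_const measure_Icc_lt_top.ne)
          (ae_restrict_of_ae_restrict_of_subset hsub hgM)
    _ = M * r := by simp [hr.1, mul_comm]

theorem integral_mul_setIntegral_Iic_le (hg : IntegrableOn g (Icc 0 τ))
    (hg0 : ∀ᵐ r ∂(volume.restrict (Icc (0 : ℝ) τ)), 0 ≤ g r)
    (hgM : ∀ᵐ r ∂(volume.restrict (Icc (0 : ℝ) τ)), g r ≤ M) :
    ∫ r, g r * ∫ s in Iic r, g s ∂(volume.restrict (Icc 0 τ)) ∂(volume.restrict (Icc 0 τ))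
      ≤ M * ∫ r in Icc 0 τ, r * g r := by
  have hrg : IntegrableOn (fun r => r * g r) (Icc 0 τ) :=
    hg.continuousOn_mul continuousOn_id isCompact_Icc
  rw [← integral_const_mul]
  refine integral_mono_ae (integrable_mul_setIntegral_Iic hg) (hrg.const_mul M) ?_
  filter_upwards [hg0, ae_restrict_mem measurableSet_Icc] with r hr0 hr
  calc g r * ∫ s in Iic r, g s ∂(volume.restrict (Icc 0 τ)) ≤ g r * (M * r) :=
        mul_le_mul_of_nonneg_left (setIntegral_Iic_le_mul_of_ae_le hg hgM hr) hr0
    _ = M * (r * g r) := by ring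

end Interval

theorem stmt9_general (τ : ℝ) (hτ : 0 ≤ τ) (g : ℝ → ℝ) (M : ℝ)
    (hg : IntervalIntegrable g volume 0 τ)
    (hg0 : ∀ᵐ r ∂(volume.restrict (Set.Icc (0 : ℝ) τ)), 0 ≤ g r)
    (hgM : ∀ᵐ r ∂(volume.restrict (Set.Icc (0 : ℝ) τ)), g r ≤ M) :
    (∫ r in (0 : ℝ)..τ, g r) ^ 2 ≤ 2 * M * ∫ r in (0 : ℝ)..τ, r * g r := by
  have hgIcc : IntegrableOn g (Icc 0 τ) := (intervalIntegrable_iff_integrableOn_Icc_of_le hτ).mp hg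
  have hIcc (h : ℝ → ℝ) : ∫ r in (0 : ℝ)..τ, h r = ∫ r in Icc 0 τ, h r := by
    rw [intervalIntegral.integral_of_le hτ, integral_Icc_eq_integral_Ioc]
  rw [hIcc, hIcc, mul_assoc]
  calc (∫ r in Icc 0 τ, g r) ^ 2
      ≤ 2 * ∫ r, g r * ∫ s in Iic r, g s ∂(volume.restrict (Icc 0 τ)) ∂(volume.restrict (Icc 0 τ)) :=
        sq_integral_le_two_mul_integral_mul_setIntegral_Iic hgIcc
    _ ≤ 2 * (M * ∫ r in Icc 0 τ, r * g r) := by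
        gcongr
        exact integral_mul_setIntegral_Iic_le hgIcc hg0 hgM

/-- Elementary one-dimensional inequality: if `g : [0,τ] → [0,∞)`
is measurable and integrable with `g ≤ M` a.e., then
`(∫₀^τ g(r) dr)² ≤ 2 M ∫₀^τ r·g(r) dr`. -/
theorem stmt9 (τ : ℝ) (hτ : 0 ≤ τ) (g : ℝ → ℝ) (M : ℝ) (hM : 0 ≤ M)
    (hg : IntervalIntegrable g volume 0 τ)
    (hg0 : ∀ᵐ r ∂(volume.restrict (Set.Icc (0 : ℝ) τ)), 0 ≤ g r)
    (hgM : ∀ᵐ r ∂(volume.restrict (Set.Icc (0 : ℝ) τ)), g r ≤ M) :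
    (∫ r in (0 : ℝ)..τ, g r) ^ 2 ≤ 2 * M * ∫ r in (0 : ℝ)..τ, r * g r :=
  stmt9_general τ hτ g M hg hg0 hgM
end

section
/- Let d ≥ 1, let n ∈ ℝ^d with ‖n‖ = 1, and let A : ℝ^d → ℝ^d be a linear map. Assume: (i) A t = 0 for every t ∈ ℝ^d with ⟨t, n⟩ = 0; (ii) trace A = 0; (iii) ⟨(A + Aᵀ) n, t⟩ = 0 for every t ∈ ℝ^d with ⟨t, n⟩ = 0, where Aᵀ is the adjoint (transpose) of A. Then A = 0. -/
/-! A linear map vanishing on `n^⊥` is the rank-one map `x ↦ ⟪n, x⟫ • v` with `v = A n`. Its trace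
is `⟪n, v⟫`, so `v ⊥ n`; its adjoint sends `n` to `⟪v, n⟫ • n = 0`, so `(A + Aᵀ) n = v`, and testing
the third hypothesis against `t = v` gives `‖v‖² = 0`. -/

open LinearMap
open scoped RealInnerProductSpace

namespace LinearMap

variable {E F : Type*} [NormedAddCommGroup E] [InnerProductSpace ℝ E]

theorem eq_smulRight_innerₗ_of_forall_inner_eq_zero [AddCommGroup F] [Module ℝ F] {n : E}
    (hn : ‖n‖ = 1) {A : E →ₗ[ℝ] F} (hA : ∀ t, ⟪t, n⟫ = 0 → A t = 0) :
    A = (innerₗ E n).smulRight (A n) := by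
  have hnn : ⟪n, n⟫ = 1 := by rw [real_inner_self_eq_norm_sq, hn, one_pow]
  ext x
  have hperp : ⟪x - ⟪n, x⟫ • n, n⟫ = 0 := by
    rw [inner_sub_left, real_inner_smul_left, hnn, mul_one, real_inner_comm, sub_self]
  have := hA _ hperp
  rwa [map_sub, map_smul, sub_eq_zero] at this

theorem adjoint_smulRight_innerₗ_apply [NormedAddCommGroup F] [InnerProductSpace ℝ F]
    [FiniteDimensional ℝ E] [FiniteDimensional ℝ F] (n : E) (v w : F) :
    adjoint ((innerₗ E n).smulRight v) w = ⟪v, w⟫ • n := by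
  refine ext_inner_left ℝ fun x => ?_
  rw [adjoint_inner_right, smulRight_apply, innerₗ_apply_apply, real_inner_smul_left,
    real_inner_smul_right, real_inner_comm x n, mul_comm]

end LinearMap

theorem stmt11_general (d : ℕ)
    (n : EuclideanSpace ℝ (Fin d)) (hn : ‖n‖ = 1)
    (A : EuclideanSpace ℝ (Fin d) →ₗ[ℝ] EuclideanSpace ℝ (Fin d))
    (h1 : ∀ t, (inner ℝ t n : ℝ) = 0 → A t = 0)
    (h2 : LinearMap.trace ℝ (EuclideanSpace ℝ (Fin d)) A = 0)
    (h3 : ∀ t, (inner ℝ t n : ℝ) = 0 →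
      (inner ℝ ((A + LinearMap.adjoint A) n) t : ℝ) = 0) :
    A = 0 := by
  have hA := eq_smulRight_innerₗ_of_forall_inner_eq_zero hn h1
  have hnv : ⟪n, A n⟫ = 0 := by
    rwa [hA, trace_smulRight, innerₗ_apply_apply] at h2
  have hsym : (A + adjoint A) n = A n := by
    rw [LinearMap.add_apply, hA, adjoint_smulRight_innerₗ_apply, smulRight_apply,
      innerₗ_apply_apply, real_inner_self_eq_norm_sq, hn, real_inner_comm, hnv]
    simp
  have hv : A n = 0 := by
    have := h3 (A n) (by rwa [real_inner_comm])
    rwa [hsym, inner_self_eq_zero] at this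
  rw [hA, hv, smulRight_zero]

/-- Linear-algebraic core of the no-jump lemma for the velocity
gradient: if a linear map `A` on `ℝ^d` vanishes on the orthogonal complement of a
unit vector `n`, is trace free, and the symmetric part `A + Aᵀ` maps `n` into the
span of `n` (i.e. `⟨(A + Aᵀ)n, t⟩ = 0` for all `t ⊥ n`), then `A = 0`. -/
theorem stmt11 (d : ℕ) (hd : 1 ≤ d)
    (n : EuclideanSpace ℝ (Fin d)) (hn : ‖n‖ = 1)
    (A : EuclideanSpace ℝ (Fin d) →ₗ[ℝ] EuclideanSpace ℝ (Fin d))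
    (h1 : ∀ t, (inner ℝ t n : ℝ) = 0 → A t = 0)
    (h2 : LinearMap.trace ℝ (EuclideanSpace ℝ (Fin d)) A = 0)
    (h3 : ∀ t, (inner ℝ t n : ℝ) = 0 →
      (inner ℝ ((A + LinearMap.adjoint A) n) t : ℝ) = 0) :
    A = 0 :=
  stmt11_general d n hn A h1 h2 h3
end

section
/- Let d ≥ 1, ε > 0, let φ : ℝ^d → ℝ be twice continuously differentiable, let W : ℝ → [0, ∞) be continuously differentiable, and let η : ℝ^d → ℝ^d be continuously differentiable with compact support. Set H := −ε Δφ + ε^{−1} W'(φ). Then −ε ∫_{ℝ^d} Σ_{i,j=1}^d (∂_i φ)(∂_j φ)(∂_j η_i) dx = −∫_{ℝ^d} H · ⟨η, ∇φ⟩ dx − ∫_{ℝ^d} (div η) · √(2W(φ)) ‖∇φ‖ dx − ∫_{ℝ^d} (div η) · (1/2)( √ε‖∇φ‖ − √(2W(φ))/√ε )² dx. -/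
/-!
Write `e = ε/2 ‖∇φ‖² + W(φ)/ε` for the Allen–Cahn energy density. By the product rule and the
symmetry of `D²φ`, the capillary stress satisfies the pointwise identity
`div (ε ∇φ ⊗ ∇φ) = -H ∇φ + ∇e`. Testing it against `η` and integrating by parts on both sides
moves all derivatives onto `η`:
`-ε ∫ ∇φ ⊗ ∇φ : ∇η = -∫ H ⟪η, ∇φ⟫ - ∫ (div η) e`.
Completing the square, `e = √(2W(φ)) ‖∇φ‖ + ½ (√ε ‖∇φ‖ - √(2W(φ))/√ε)²`, splits the last
integral into the surface-tension and the equipartition-defect terms.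
-/

open MeasureTheory

section Calculus

variable {E F : Type*} [NormedAddCommGroup E] [NormedSpace ℝ E] [NormedAddCommGroup F]
  [NormedSpace ℝ F]

theorem ContDiff.fderiv_apply_right {f : E → F} {m n : WithTop ℕ∞} (hf : ContDiff ℝ n f)
    (hmn : m + 1 ≤ n) (v : E) : ContDiff ℝ m fun y => fderiv ℝ f y v :=
  (hf.fderiv_right hmn).clm_apply contDiff_const

theorem ContDiff.continuous_fderiv_apply_right {f : E → F} {n : WithTop ℕ∞} (hf : ContDiff ℝ n f)
    (hn : n ≠ 0) (v : E) : Continuous fun y => fderiv ℝ f y v :=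
  (hf.continuous_fderiv hn).clm_apply continuous_const

theorem fderiv_fderiv_apply_comm {φ : E → F} {x : E} (hφ : ContDiffAt ℝ 2 φ x) (v w : E) :
    fderiv ℝ (fun y => fderiv ℝ φ y v) x w = fderiv ℝ (fun y => fderiv ℝ φ y w) x v := by
  have hD : DifferentiableAt ℝ (fderiv ℝ φ) x :=
    (hφ.fderiv_right (m := 1) le_rfl).differentiableAt one_ne_zero
  simp only [fderiv_clm_apply hD (differentiableAt_const _), fderiv_const_apply,
    ContinuousLinearMap.comp_zero, zero_add, ContinuousLinearMap.flip_apply]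
  exact (hφ.isSymmSndFDerivAt (by simp)).eq w v

theorem ContDiff.continuous_gradient {F : Type*} [NormedAddCommGroup F] [InnerProductSpace ℝ F]
    [CompleteSpace F] {f : F → ℝ} {n : WithTop ℕ∞} (hf : ContDiff ℝ n f) (hn : n ≠ 0) :
    Continuous (gradient f) :=
  (InnerProductSpace.toDual ℝ F).symm.continuous.comp (hf.continuous_fderiv hn)

end Calculus

theorem Continuous.integrable_mul_of_hasCompactSupport {X : Type*} [TopologicalSpace X]
    [MeasurableSpace X] [OpensMeasurableSpace X] {μ : Measure X} [IsFiniteMeasureOnCompacts μ]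
    {f g : X → ℝ} (hf : Continuous f) (hg : Continuous g) (hgc : HasCompactSupport g) :
    Integrable (fun x => g x * f x) μ :=
  (hg.mul hf).integrable_of_hasCompactSupport hgc.mul_right

section IntegrationByParts

variable {E : Type*} [NormedAddCommGroup E] [NormedSpace ℝ E] [FiniteDimensional ℝ E]
  [MeasurableSpace E] [BorelSpace E] {μ : Measure E} [μ.IsAddHaarMeasure]

theorem integral_fderiv_mul_eq_neg_integral_mul_fderiv {f g : E → ℝ} (hf : ContDiff ℝ 1 f)
    (hg : ContDiff ℝ 1 g) (hgc : HasCompactSupport g) (v : E) :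
    ∫ x, fderiv ℝ g x v * f x ∂μ = -∫ x, g x * fderiv ℝ f x v ∂μ := by
  rw [integral_mul_fderiv_eq_neg_fderiv_mul_of_integrable
    (hf.continuous.integrable_mul_of_hasCompactSupport
      (hg.continuous_fderiv_apply_right one_ne_zero v) (hgc.fderiv_apply (𝕜 := ℝ) v))
    ((hf.continuous_fderiv_apply_right one_ne_zero v).integrable_mul_of_hasCompactSupport
      hg.continuous hgc)
    (hf.continuous.integrable_mul_of_hasCompactSupport hg.continuous hgc)
    (fun x _ => hg.differentiable one_ne_zero x) (fun x _ => hf.differentiable one_ne_zero x),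
    neg_neg]

theorem integral_sum_fderiv_mul_eq_neg_integral_sum_mul_fderiv {ι : Type*} (s : Finset ι)
    {f g : ι → E → ℝ} (hf : ∀ i ∈ s, ContDiff ℝ 1 (f i)) (hg : ∀ i ∈ s, ContDiff ℝ 1 (g i))
    (hgc : ∀ i ∈ s, HasCompactSupport (g i)) (v : ι → E) :
    ∫ x, ∑ i ∈ s, fderiv ℝ (g i) x (v i) * f i x ∂μ
      = -∫ x, ∑ i ∈ s, g i x * fderiv ℝ (f i) x (v i) ∂μ := by
  rw [integral_finsetSum, integral_finsetSum, ← Finset.sum_neg_distrib]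
  · exact Finset.sum_congr rfl fun i hi =>
      integral_fderiv_mul_eq_neg_integral_mul_fderiv (hf i hi) (hg i hi) (hgc i hi) (v i)
  · exact fun i hi => ((hf i hi).continuous_fderiv_apply_right one_ne_zero
      (v i)).integrable_mul_of_hasCompactSupport (hg i hi).continuous (hgc i hi)
  · exact fun i hi => (hf i hi).continuous.integrable_mul_of_hasCompactSupport
      ((hg i hi).continuous_fderiv_apply_right one_ne_zero (v i))
      ((hgc i hi).fderiv_apply (𝕜 := ℝ) (v i))

end IntegrationByParts

namespace EuclideanSpace

variable {ι : Type*}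

theorem hasCompactSupport_apply {η : EuclideanSpace ℝ ι → EuclideanSpace ℝ ι}
    (hηc : HasCompactSupport η) (i : ι) : HasCompactSupport fun x => η x i :=
  hηc.comp_left (g := fun v : EuclideanSpace ℝ ι => v i) rfl

variable [Fintype ι]

theorem integrable_sum_apply_mul {η : EuclideanSpace ℝ ι → EuclideanSpace ℝ ι}
    (hη : Continuous η) (hηc : HasCompactSupport η) {c : ι → EuclideanSpace ℝ ι → ℝ}
    (hc : ∀ i, Continuous (c i)) : Integrable fun x => ∑ i, η x i * c i x :=
  integrable_finsetSum _ fun i _ => (hc i).integrable_mul_of_hasCompactSupport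
    ((PiLp.continuous_apply 2 _ i).comp hη) (hasCompactSupport_apply hηc i)

variable [DecidableEq ι]

theorem gradient_apply (φ : EuclideanSpace ℝ ι → ℝ) (x : EuclideanSpace ℝ ι) (i : ι) :
    gradient φ x i = fderiv ℝ φ x (single i 1) := by
  rw [← inner_gradient_left, inner_single_right]
  simp

theorem inner_gradient (φ : EuclideanSpace ℝ ι → ℝ) (v x : EuclideanSpace ℝ ι) :
    inner ℝ v (gradient φ x) = ∑ i, v i * fderiv ℝ φ x (single i 1) := by
  simp only [PiLp.inner_apply, RCLike.inner_apply, conj_trivial, gradient_apply, mul_comm]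

theorem norm_gradient_sq (φ : EuclideanSpace ℝ ι → ℝ) (x : EuclideanSpace ℝ ι) :
    ‖gradient φ x‖ ^ 2 = ∑ i, fderiv ℝ φ x (single i 1) ^ 2 := by
  simp [real_norm_sq_eq, gradient_apply]

variable {η : EuclideanSpace ℝ ι → EuclideanSpace ℝ ι}

theorem integrable_sum_fderiv_apply_mul (hη : ContDiff ℝ 1 η) (hηc : HasCompactSupport η)
    {c : EuclideanSpace ℝ ι → ℝ} (hc : Continuous c) :
    Integrable fun x => (∑ i, fderiv ℝ (fun y => η y i) x (single i 1)) * c x := by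
  simp only [Finset.sum_mul]
  exact integrable_finsetSum _ fun i _ => hc.integrable_mul_of_hasCompactSupport
    (((contDiff_piLp 2).1 hη i).continuous_fderiv_apply_right one_ne_zero _)
    ((hasCompactSupport_apply hηc i).fderiv_apply (𝕜 := ℝ) _)

theorem integral_sum_fderiv_apply_mul_eq_neg (hη : ContDiff ℝ 1 η) (hηc : HasCompactSupport η)
    {f : EuclideanSpace ℝ ι → ℝ} (hf : ContDiff ℝ 1 f) :
    ∫ x, (∑ i, fderiv ℝ (fun y => η y i) x (single i 1)) * f x
      = -∫ x, ∑ i, η x i * fderiv ℝ f x (single i 1) := by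
  simpa only [Finset.sum_mul] using integral_sum_fderiv_mul_eq_neg_integral_sum_mul_fderiv
    Finset.univ (f := fun _ => f) (fun _ _ => hf) (fun i _ => (contDiff_piLp 2).1 hη i)
    (fun i _ => hasCompactSupport_apply hηc i) (fun i => single i 1)

theorem integral_sum_sum_mul_fderiv_apply_eq_neg (hη : ContDiff ℝ 1 η)
    (hηc : HasCompactSupport η) {T : ι → ι → EuclideanSpace ℝ ι → ℝ}
    (hT : ∀ i j, ContDiff ℝ 1 (T i j)) :
    ∫ x, ∑ i, ∑ j, T i j x * fderiv ℝ (fun y => η y i) x (single j 1)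
      = -∫ x, ∑ i, η x i * ∑ j, fderiv ℝ (T i j) x (single j 1) := by
  have := integral_sum_fderiv_mul_eq_neg_integral_sum_mul_fderiv (μ := volume)
    (Finset.univ : Finset (ι × ι)) (f := fun p => T p.1 p.2) (g := fun p y => η y p.1)
    (fun p _ => hT p.1 p.2) (fun p _ => (contDiff_piLp 2).1 hη p.1)
    (fun p _ => hasCompactSupport_apply hηc p.1) (fun p => single p.2 1)
  simpa only [Finset.univ_product_univ, Fintype.sum_prod_type, Finset.mul_sum, mul_comm]
    using this

end EuclideanSpace

noncomputable section PhaseField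

open EuclideanSpace

variable {ι : Type*} [Fintype ι]

def allenCahnEnergyDensity (ε : ℝ) (W : ℝ → ℝ) (φ : EuclideanSpace ℝ ι → ℝ)
    (x : EuclideanSpace ℝ ι) : ℝ :=
  ε / 2 * ‖gradient φ x‖ ^ 2 + ε⁻¹ * W (φ x)

variable {ε : ℝ} {W : ℝ → ℝ} {φ : EuclideanSpace ℝ ι → ℝ}

theorem allenCahnEnergyDensity_eq_add_sq (hε : 0 < ε) {x : EuclideanSpace ℝ ι}
    (hW : 0 ≤ W (φ x)) :
    allenCahnEnergyDensity ε W φ x = √(2 * W (φ x)) * ‖gradient φ x‖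
      + 1 / 2 * (√ε * ‖gradient φ x‖ - √(2 * W (φ x)) / √ε) ^ 2 := by
  have hsε : √ε ^ 2 = ε := Real.sq_sqrt hε.le
  have hsW : √(2 * W (φ x)) ^ 2 = 2 * W (φ x) := Real.sq_sqrt (by positivity)
  have : √ε ≠ 0 := (Real.sqrt_pos.2 hε).ne'
  rw [allenCahnEnergyDensity, sub_sq, mul_pow, div_pow, hsε, hsW]
  field_simp
  ring

variable [DecidableEq ι]

def phaseFieldCurvature (ε : ℝ) (W : ℝ → ℝ) (φ : EuclideanSpace ℝ ι → ℝ)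
    (x : EuclideanSpace ℝ ι) : ℝ :=
  -ε * ∑ i, fderiv ℝ (fun y => fderiv ℝ φ y (single i 1)) x (single i 1) + ε⁻¹ * deriv W (φ x)

theorem allenCahnEnergyDensity_eq_sum (ε : ℝ) (W : ℝ → ℝ) (φ : EuclideanSpace ℝ ι → ℝ) :
    allenCahnEnergyDensity ε W φ
      = fun x => ε / 2 * ∑ k, fderiv ℝ φ x (single k 1) ^ 2 + ε⁻¹ * W (φ x) := by
  funext x
  rw [allenCahnEnergyDensity, norm_gradient_sq]

theorem contDiff_allenCahnEnergyDensity (hφ : ContDiff ℝ 2 φ) (hW : ContDiff ℝ 1 W) :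
    ContDiff ℝ 1 (allenCahnEnergyDensity ε W φ) := by
  rw [allenCahnEnergyDensity_eq_sum]
  exact (contDiff_const.mul (ContDiff.sum fun k _ => (hφ.fderiv_apply_right le_rfl _).pow 2)).add
    (contDiff_const.mul (hW.comp (hφ.of_le one_le_two)))

theorem fderiv_allenCahnEnergyDensity (hφ : ContDiff ℝ 2 φ) (hW : Differentiable ℝ W)
    (x v : EuclideanSpace ℝ ι) :
    fderiv ℝ (allenCahnEnergyDensity ε W φ) x v
      = ε * ∑ k, fderiv ℝ φ x (single k 1) * fderiv ℝ (fun y => fderiv ℝ φ y (single k 1)) x v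
        + ε⁻¹ * (deriv W (φ x) * fderiv ℝ φ x v) := by
  have hφk : ∀ k, Differentiable ℝ fun y => fderiv ℝ φ y (single k 1) := fun k =>
    (hφ.fderiv_apply_right le_rfl _).differentiable one_ne_zero
  have h : HasFDerivAt (fun y => ε / 2 * ∑ k, fderiv ℝ φ y (single k 1) ^ 2 + ε⁻¹ * W (φ y)) _ x :=
    ((HasFDerivAt.fun_sum fun k _ => (hφk k x).hasFDerivAt.pow 2).const_mul (ε / 2)).fun_add
      (((hW (φ x)).hasDerivAt.comp_hasFDerivAt x
        ((hφ.differentiable two_ne_zero) x).hasFDerivAt).const_mul ε⁻¹)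
  rw [allenCahnEnergyDensity_eq_sum, h.fderiv]
  simp only [Nat.add_one_sub_one, pow_one, nsmul_eq_mul, Nat.cast_ofNat, add_apply, smul_apply,
    sum_apply, smul_eq_mul, Finset.mul_sum, add_left_inj]
  exact Finset.sum_congr rfl fun _ _ => by ring

/-- `div (ε ∇φ ⊗ ∇φ) = -H ∇φ + ∇e`, componentwise: symmetry of `D²φ` turns
`∑ⱼ ∂ⱼφ ∂ⱼ∂ᵢφ` into `∂ᵢ (‖∇φ‖² / 2)`. -/
theorem mul_sum_fderiv_mul_fderiv_eq (hφ : ContDiff ℝ 2 φ) (hW : Differentiable ℝ W)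
    (x : EuclideanSpace ℝ ι) (i : ι) :
    ε * ∑ j, fderiv ℝ (fun y => fderiv ℝ φ y (single i 1) * fderiv ℝ φ y (single j 1)) x
        (single j 1)
      = -phaseFieldCurvature ε W φ x * fderiv ℝ φ x (single i 1)
        + fderiv ℝ (allenCahnEnergyDensity ε W φ) x (single i 1) := by
  have hφk : ∀ k, Differentiable ℝ fun y => fderiv ℝ φ y (single k 1) := fun k =>
    (hφ.fderiv_apply_right le_rfl _).differentiable one_ne_zero
  simp only [fderiv_fun_mul (hφk i x) (hφk _ x), fderiv_allenCahnEnergyDensity hφ hW,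
    phaseFieldCurvature, fderiv_fderiv_apply_comm hφ.contDiffAt _ (single i 1), add_apply,
    smul_apply, smul_eq_mul]
  rw [Finset.sum_add_distrib, ← Finset.mul_sum]
  ring

theorem phaseFieldCurvature_mul_inner_gradient (hφ : ContDiff ℝ 2 φ) (hW : Differentiable ℝ W)
    (v x : EuclideanSpace ℝ ι) :
    phaseFieldCurvature ε W φ x * inner ℝ v (gradient φ x)
      = ∑ i, v i * fderiv ℝ (allenCahnEnergyDensity ε W φ) x (single i 1)
        - ε * ∑ i, v i * ∑ j,
          fderiv ℝ (fun y => fderiv ℝ φ y (single i 1) * fderiv ℝ φ y (single j 1)) x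
            (single j 1) := by
  rw [inner_gradient, Finset.mul_sum, Finset.mul_sum, ← Finset.sum_sub_distrib]
  refine Finset.sum_congr rfl fun i _ => ?_
  linear_combination v i * mul_sum_fderiv_mul_fderiv_eq hφ hW x i

theorem neg_mul_integral_stress_eq_curvature_sub_energy (hφ : ContDiff ℝ 2 φ)
    (hW : ContDiff ℝ 1 W) {η : EuclideanSpace ℝ ι → EuclideanSpace ℝ ι} (hη : ContDiff ℝ 1 η)
    (hηc : HasCompactSupport η) :
    -ε * ∫ x, ∑ i, ∑ j, fderiv ℝ φ x (single i 1) * fderiv ℝ φ x (single j 1)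
        * fderiv ℝ (fun y => η y i) x (single j 1)
      = -(∫ x, phaseFieldCurvature ε W φ x * inner ℝ (η x) (gradient φ x))
        - ∫ x, (∑ i, fderiv ℝ (fun y => η y i) x (single i 1))
          * allenCahnEnergyDensity ε W φ x := by
  have hφi : ∀ i, ContDiff ℝ 1 fun y => fderiv ℝ φ y (single i 1) := fun i =>
    hφ.fderiv_apply_right le_rfl _
  have he := contDiff_allenCahnEnergyDensity (ε := ε) hφ hW
  have hA := integrable_sum_apply_mul hη.continuous hηc fun i =>
    continuous_finsetSum Finset.univ fun j _ =>
      ((hφi i).mul (hφi j)).continuous_fderiv_apply_right one_ne_zero (single j 1)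
  have hB := integrable_sum_apply_mul hη.continuous hηc fun i =>
    he.continuous_fderiv_apply_right one_ne_zero (single i 1)
  rw [integral_sum_sum_mul_fderiv_apply_eq_neg hη hηc fun i j => (hφi i).mul (hφi j),
    integral_sum_fderiv_apply_mul_eq_neg hη hηc he]
  simp only [phaseFieldCurvature_mul_inner_gradient hφ (hW.differentiable one_ne_zero)]
  rw [integral_sub hB (hA.const_mul ε), integral_const_mul]
  ring

end PhaseField

theorem stmt13_general (d : ℕ) (ε : ℝ) (hε : 0 < ε)
    (φ : EuclideanSpace ℝ (Fin d) → ℝ) (hφ : ContDiff ℝ 2 φ)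
    (W : ℝ → ℝ) (hW : ContDiff ℝ 1 W) (hW0 : ∀ r, 0 ≤ W r)
    (η : EuclideanSpace ℝ (Fin d) → EuclideanSpace ℝ (Fin d))
    (hη : ContDiff ℝ 1 η) (hηc : HasCompactSupport η)
    (H : EuclideanSpace ℝ (Fin d) → ℝ)
    (hH : ∀ x, H x = -ε * (∑ i : Fin d,
          fderiv ℝ (fun y => fderiv ℝ φ y (EuclideanSpace.single i 1)) x
            (EuclideanSpace.single i 1))
        + ε⁻¹ * deriv W (φ x)) :
    -ε * ∫ x, ∑ i : Fin d, ∑ j : Fin d,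
          fderiv ℝ φ x (EuclideanSpace.single i 1)
            * fderiv ℝ φ x (EuclideanSpace.single j 1)
            * fderiv ℝ (fun y => η y i) x (EuclideanSpace.single j 1)
      = -(∫ x, H x * (inner ℝ (η x) (gradient φ x) : ℝ))
        - (∫ x, (∑ i : Fin d,
              fderiv ℝ (fun y => η y i) x (EuclideanSpace.single i 1))
            * (Real.sqrt (2 * W (φ x)) * ‖gradient φ x‖))
        - ∫ x, (∑ i : Fin d,
              fderiv ℝ (fun y => η y i) x (EuclideanSpace.single i 1))
            * (1 / 2 * (Real.sqrt ε * ‖gradient φ x‖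
                - Real.sqrt (2 * W (φ x)) / Real.sqrt ε) ^ 2) := by
  obtain rfl : H = phaseFieldCurvature ε W φ := funext hH
  have hg : Continuous fun x => ‖gradient φ x‖ := (hφ.continuous_gradient two_ne_zero).norm
  have hs : Continuous fun x => √(2 * W (φ x)) :=
    (continuous_const.mul (hW.continuous.comp hφ.continuous)).sqrt
  rw [neg_mul_integral_stress_eq_curvature_sub_energy hφ hW hη hηc, sub_sub, ← integral_add
    (EuclideanSpace.integrable_sum_fderiv_apply_mul hη hηc (hs.fun_mul hg))
    (EuclideanSpace.integrable_sum_fderiv_apply_mul hη hηc (continuous_const.fun_mul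
      (((continuous_const.fun_mul hg).fun_sub (hs.div_const _)).fun_pow 2)))]
  congr 2 with x
  rw [← mul_add, ← allenCahnEnergyDensity_eq_add_sq hε (hW0 _)]

/-- Approximate Gibbs–Thomson identity: for `φ ∈ C²(ℝ^d)`,
`W ∈ C¹(ℝ; [0,∞))`, `η ∈ C¹_c(ℝ^d; ℝ^d)` and `H := −εΔφ + ε⁻¹W'(φ)`, testing the
capillary stress `ε∇φ⊗∇φ` against `∇η` produces the curvature term, the
surface-tension term with density `√(2W(φ))‖∇φ‖`, and a lack-of-equipartition
term. -/
theorem stmt13 (d : ℕ) (hd : 1 ≤ d) (ε : ℝ) (hε : 0 < ε)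
    (φ : EuclideanSpace ℝ (Fin d) → ℝ) (hφ : ContDiff ℝ 2 φ)
    (W : ℝ → ℝ) (hW : ContDiff ℝ 1 W) (hW0 : ∀ r, 0 ≤ W r)
    (η : EuclideanSpace ℝ (Fin d) → EuclideanSpace ℝ (Fin d))
    (hη : ContDiff ℝ 1 η) (hηc : HasCompactSupport η)
    (H : EuclideanSpace ℝ (Fin d) → ℝ)
    (hH : ∀ x, H x = -ε * (∑ i : Fin d,
          fderiv ℝ (fun y => fderiv ℝ φ y (EuclideanSpace.single i 1)) x
            (EuclideanSpace.single i 1))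
        + ε⁻¹ * deriv W (φ x)) :
    -ε * ∫ x, ∑ i : Fin d, ∑ j : Fin d,
          fderiv ℝ φ x (EuclideanSpace.single i 1)
            * fderiv ℝ φ x (EuclideanSpace.single j 1)
            * fderiv ℝ (fun y => η y i) x (EuclideanSpace.single j 1)
      = -(∫ x, H x * (inner ℝ (η x) (gradient φ x) : ℝ))
        - (∫ x, (∑ i : Fin d,
              fderiv ℝ (fun y => η y i) x (EuclideanSpace.single i 1))
            * (Real.sqrt (2 * W (φ x)) * ‖gradient φ x‖))
        - ∫ x, (∑ i : Fin d,
              fderiv ℝ (fun y => η y i) x (EuclideanSpace.single i 1))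
            * (1 / 2 * (Real.sqrt ε * ‖gradient φ x‖
                - Real.sqrt (2 * W (φ x)) / Real.sqrt ε) ^ 2) :=
  stmt13_general d ε hε φ hφ W hW hW0 η hη hηc H hH
end
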